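/- arXiv:1810.05227 — 4 statements merged into one kernel-verified Lean document; each statement's English description precedes it below -/
import Mathlib

section
/- Let T, U, V, d be nonnegative integers and r a positive integer. Let A = (A_1,…,A_r), B = (B_1,…,B_r), C = (C_1,…,C_r) be r-tuples of nonnegative integers with ∑A_i = T, ∑B_i = U, ∑C_i = V. If A_i ≥ C_i for each i ∈ [1,r], then ∏_{i=1}^r (A_i + B_i + d)! ≤ ((T+U+d)!/(V+U+d)!) · ∏_{i=1}^r (C_i + B_i + d)!. -/
open Finset

lemma stmt_3_aux (r : ℕ) (d U : ℕ) (B C : Fin r → ℕ) (hB : ∀ i, B i ≤ U) :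
    ∀ n (A : Fin r → ℕ), (∀ i, C i ≤ A i) → (∑ i, A i) = (∑ i, C i) + n →
    (∏ i, (Nat.factorial (A i + B i + d) : ℝ)) * (Nat.factorial ((∑ i, C i) + U + d) : ℝ)
      ≤ (Nat.factorial ((∑ i, C i) + U + d + n) : ℝ) * ∏ i, (Nat.factorial (C i + B i + d) : ℝ) := by
  intro n
  induction n with
  | zero =>
    intro A hAC hsum
    have hAC' : ∀ i ∈ Finset.univ, C i = A i :=
      (Finset.sum_eq_sum_iff_of_le (fun i _ => hAC i)).mp (by omega)
    have hAc : ∀ i, A i = C i := fun i => (hAC' i (Finset.mem_univ i)).symm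
    simp [hAc, mul_comm]
  | succ n ih =>
    intro A hAC hsum
    have hex : ∃ i, C i < A i := by
      by_contra h
      push_neg at h
      have hAc : ∀ i, A i = C i := fun i => le_antisymm (h i) (hAC i)
      simp only [hAc] at hsum
      omega
    obtain ⟨i, hi⟩ := hex
    set A' : Fin r → ℕ := Function.update A i (A i - 1) with hA'
    have hA'i : A' i = A i - 1 := Function.update_self i (A i - 1) A
    have hA'j : ∀ j, j ≠ i → A' j = A j := fun j hj => Function.update_of_ne hj _ _
    have hC' : ∀ j, C j ≤ A' j := by
      intro j
      rcases eq_or_ne j i with rfl | hj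
      · rw [hA'i]; omega
      · rw [hA'j j hj]; exact hAC j
    have hsplitA : (∑ j, A j) = A i + ∑ j ∈ Finset.univ.erase i, A j :=
      (Finset.add_sum_erase _ _ (Finset.mem_univ i)).symm
    have hsplitA' : (∑ j, A' j) = A' i + ∑ j ∈ Finset.univ.erase i, A' j :=
      (Finset.add_sum_erase _ _ (Finset.mem_univ i)).symm
    have heraseeq : ∑ j ∈ Finset.univ.erase i, A' j = ∑ j ∈ Finset.univ.erase i, A j :=
      Finset.sum_congr rfl (fun j hj => hA'j j (Finset.ne_of_mem_erase hj))
    have hsum' : (∑ j, A' j) = (∑ j, C j) + n := by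
      rw [hsplitA', heraseeq, hA'i]
      omega
    -- product splitting
    set P : ℝ := ∏ j ∈ Finset.univ.erase i, (Nat.factorial (A j + B j + d) : ℝ) with hP
    have hprodA : (∏ j, (Nat.factorial (A j + B j + d) : ℝ))
        = (Nat.factorial (A i + B i + d) : ℝ) * P :=
      (Finset.mul_prod_erase _ _ (Finset.mem_univ i)).symm
    have hprodA' : (∏ j, (Nat.factorial (A' j + B j + d) : ℝ))
        = (Nat.factorial (A i - 1 + B i + d) : ℝ) * P := by
      rw [← Finset.mul_prod_erase _ _ (Finset.mem_univ i), hA'i]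
      congr 1
      exact Finset.prod_congr rfl (fun j hj => by rw [hA'j j (Finset.ne_of_mem_erase hj)])
    have hfactstep : (Nat.factorial (A i + B i + d) : ℝ)
        = ((A i + B i + d : ℕ) : ℝ) * (Nat.factorial (A i - 1 + B i + d) : ℝ) := by
      have h1 : A i + B i + d = (A i - 1 + B i + d) + 1 := by omega
      rw [h1, Nat.factorial_succ, Nat.cast_mul, ← h1]
    have hbound : A i + B i + d ≤ (∑ j, C j) + U + d + (n + 1) := by
      have h1 : A i ≤ ∑ j, A j := Finset.single_le_sum (fun j _ => Nat.zero_le _) (Finset.mem_univ i)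
      have h2 : B i ≤ U := hB i
      omega
    have hIH := ih A' hC' hsum'
    rw [hprodA'] at hIH
    have hnn : (0:ℝ) ≤ ((A i + B i + d : ℕ) : ℝ) := Nat.cast_nonneg _
    calc (∏ j, (Nat.factorial (A j + B j + d) : ℝ)) * (Nat.factorial ((∑ j, C j) + U + d) : ℝ)
        = ((A i + B i + d : ℕ) : ℝ) *
            ((Nat.factorial (A i - 1 + B i + d) : ℝ) * P * (Nat.factorial ((∑ j, C j) + U + d) : ℝ)) := by
          rw [hprodA, hfactstep]; ring
      _ ≤ ((A i + B i + d : ℕ) : ℝ) *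
            ((Nat.factorial ((∑ j, C j) + U + d + n) : ℝ) * ∏ j, (Nat.factorial (C j + B j + d) : ℝ)) := by
          apply mul_le_mul_of_nonneg_left hIH hnn
      _ ≤ (((∑ j, C j) + U + d + (n + 1) : ℕ) : ℝ) *
            ((Nat.factorial ((∑ j, C j) + U + d + n) : ℝ) * ∏ j, (Nat.factorial (C j + B j + d) : ℝ)) := by
          apply mul_le_mul_of_nonneg_right (by exact_mod_cast hbound)
          positivity
      _ = (Nat.factorial ((∑ j, C j) + U + d + (n + 1)) : ℝ) * ∏ j, (Nat.factorial (C j + B j + d) : ℝ) := by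
          have h1 : (∑ j, C j) + U + d + (n + 1) = ((∑ j, C j) + U + d + n) + 1 := by omega
          rw [h1, Nat.factorial_succ]
          push_cast
          ring

theorem stmt_3 (T U V d r : ℕ) (hr : 0 < r)
    (A B C : Fin r → ℕ)
    (hT : ∑ i, A i = T) (hU : ∑ i, B i = U) (hV : ∑ i, C i = V)
    (hAC : ∀ i, C i ≤ A i) :
    (∏ i, (Nat.factorial (A i + B i + d)) : ℝ)
      ≤ (Nat.factorial (T + U + d) : ℝ) / (Nat.factorial (V + U + d) : ℝ)
        * ∏ i, (Nat.factorial (C i + B i + d) : ℝ) := by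
  have hB : ∀ i, B i ≤ U := by
    intro i
    rw [← hU]
    exact Finset.single_le_sum (fun j _ => Nat.zero_le _) (Finset.mem_univ i)
  have hVT : V ≤ T := by
    rw [← hT, ← hV]
    exact Finset.sum_le_sum (fun i _ => hAC i)
  have key := stmt_3_aux r d U B C hB (T - V) A hAC (by omega)
  rw [hV] at key
  have h1 : V + U + d + (T - V) = T + U + d := by omega
  rw [h1] at key
  rw [div_mul_eq_mul_div, le_div_iff₀ (by positivity)]
  linarith [key]
end

section
/- Fix positive integers k and N, and let A_1,…,A_k be nonnegative integers with ∑_{i=1}^k A_i = N and max_i A_i ≤ N − 1. Then ∏_{i=1}^k (A_i + 1)! ≤ 2·N!. -/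
/-!
Pick an index `j` with `A j ≥ 1`; the other entries sum to `b = N - A j ≥ 1`. Merging factorials,
`(a + 1)! (b + 1)! ≤ (a + b + 1)!`, collapses the product over the other indices to `(b + 1)!`,
and for `a, b ≥ 1` the sharper `(a + 1)! (b + 1)! ≤ 2 (a + b)!` holds, with equality at `b = 1`.
-/

open Nat

theorem Nat.factorial_succ_mul_factorial_succ_le (a b : ℕ) :
    (a + 1)! * (b + 1)! ≤ (a + b + 1)! := by
  induction b with
  | zero => simp
  | succ b ih =>
    calc (a + 1)! * (b + 1 + 1)! = (a + 1)! * (b + 1)! * (b + 2) := by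
          rw [factorial_succ (b + 1)]; ring
      _ ≤ (a + b + 1)! * (a + b + 2) := Nat.mul_le_mul ih (by omega)
      _ = (a + (b + 1) + 1)! := by
          rw [show a + (b + 1) + 1 = a + b + 1 + 1 by omega, factorial_succ (a + b + 1)]; ring

theorem Nat.factorial_succ_mul_factorial_succ_le_two_mul {a b : ℕ} (ha : 1 ≤ a) (hb : 1 ≤ b) :
    (a + 1)! * (b + 1)! ≤ 2 * (a + b)! := by
  induction b, hb using Nat.le_induction with
  | base => simp [factorial_succ a, mul_comm]
  | succ b _ ih =>
    calc (a + 1)! * (b + 1 + 1)! = (a + 1)! * (b + 1)! * (b + 2) := by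
          rw [factorial_succ (b + 1)]; ring
      _ ≤ 2 * (a + b)! * (a + b + 1) := Nat.mul_le_mul ih (by omega)
      _ = 2 * (a + (b + 1))! := by
          rw [← add_assoc, factorial_succ (a + b)]; ring

theorem Finset.prod_factorial_succ_le_factorial_sum_succ {ι : Type*} (s : Finset ι) (f : ι → ℕ) :
    ∏ i ∈ s, (f i + 1)! ≤ (∑ i ∈ s, f i + 1)! := by
  induction s using Finset.cons_induction with
  | empty => simp
  | cons j s hj ih =>
    rw [prod_cons, sum_cons, add_assoc]
    exact (Nat.mul_le_mul_left _ ih).trans (factorial_succ_mul_factorial_succ_le _ _)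

theorem stmt_5_general (k N : ℕ) (hN : 0 < N)
    (A : Fin k → ℕ) (hA : ∑ i, A i = N) (hmax : ∀ i, A i ≤ N - 1) :
    ∏ i, Nat.factorial (A i + 1) ≤ 2 * Nat.factorial N := by
  obtain ⟨j, -, hj⟩ := Finset.exists_ne_zero_of_sum_ne_zero (hA ▸ hN.ne')
  have hsplit : A j + ∑ i ∈ Finset.univ.erase j, A i = N := by
    rw [Finset.add_sum_erase _ _ (Finset.mem_univ j), hA]
  have hrest : 1 ≤ ∑ i ∈ Finset.univ.erase j, A i := by
    have := hmax j
    omega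
  rw [← Finset.mul_prod_erase _ _ (Finset.mem_univ j), ← hsplit]
  calc (A j + 1)! * ∏ i ∈ Finset.univ.erase j, (A i + 1)!
      ≤ (A j + 1)! * (∑ i ∈ Finset.univ.erase j, A i + 1)! :=
        Nat.mul_le_mul_left _ (Finset.prod_factorial_succ_le_factorial_sum_succ _ _)
    _ ≤ 2 * (A j + ∑ i ∈ Finset.univ.erase j, A i)! :=
        factorial_succ_mul_factorial_succ_le_two_mul (Nat.one_le_iff_ne_zero.mpr hj) hrest

theorem stmt_5 (k N : ℕ) (hk : 0 < k) (hN : 0 < N)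
    (A : Fin k → ℕ) (hA : ∑ i, A i = N) (hmax : ∀ i, A i ≤ N - 1) :
    ∏ i, Nat.factorial (A i + 1) ≤ 2 * Nat.factorial N :=
  stmt_5_general k N hN A hA hmax
end

section
/- Fix positive integers k and N, and let A_1,…,A_k be nonnegative integers with ∑_{i=1}^k A_i = N and max_i A_i ≤ N − 1. Then ∏_{i=1}^k (A_i + 2)! ≤ 2^(k−2)·6·(N+1)!. -/
open Nat Finset

lemma lemL (a b : ℕ) : (a+2)! * (b+2)! ≤ 2 * (a+b+2)! := by
  have h1 := Nat.choose_mul_factorial_mul_factorial (show b ≤ b+2 by omega)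
  have h2 := Nat.choose_mul_factorial_mul_factorial (show b ≤ a+b+2 by omega)
  have e1 : b + 2 - b = 2 := by omega
  have e2 : a + b + 2 - b = a + 2 := by omega
  rw [e1] at h1
  rw [e2] at h2
  have hc : (b+2).choose b ≤ (a+b+2).choose b := Nat.choose_le_choose b (by omega)
  calc (a+2)! * (b+2)! = (a+2)! * ((b+2).choose b * b ! * 2!) := by rw [h1]
    _ ≤ (a+2)! * ((a+b+2).choose b * b ! * 2!) := by gcongr
    _ = 2 * ((a+b+2).choose b * b ! * (a+2)!) := by
        simp [Nat.factorial]; ring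
    _ = 2 * (a+b+2)! := by rw [h2]

lemma lemM (a b : ℕ) (ha : 1 ≤ a) (hb : 1 ≤ b) :
    (a+2)! * (b+2)! ≤ 6 * (a+b+1)! := by
  obtain ⟨c, rfl⟩ : ∃ c, b = c + 1 := ⟨b - 1, by omega⟩
  have h1 := Nat.choose_mul_factorial_mul_factorial (show c ≤ c+3 by omega)
  have h2 := Nat.choose_mul_factorial_mul_factorial (show c ≤ a+c+2 by omega)
  have e1 : c + 3 - c = 3 := by omega
  have e2 : a + c + 2 - c = a + 2 := by omega
  rw [e1] at h1
  rw [e2] at h2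
  have hc : (c+3).choose c ≤ (a+c+2).choose c := Nat.choose_le_choose c (by omega)
  have eb : c + 1 + 2 = c + 3 := by omega
  have eab : a + (c+1) + 1 = a + c + 2 := by omega
  rw [eb, eab]
  calc (a+2)! * (c+3)! = (a+2)! * ((c+3).choose c * c ! * 3!) := by rw [h1]
    _ ≤ (a+2)! * ((a+c+2).choose c * c ! * 3!) := by gcongr
    _ = 6 * ((a+c+2).choose c * c ! * (a+2)!) := by
        simp [Nat.factorial]; ring
    _ = 6 * (a+c+2)! := by rw [h2]

lemma prodMerge {ι : Type*} [DecidableEq ι] (A : ι → ℕ) (s : Finset ι) (hs : s.Nonempty) :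
    ∏ i ∈ s, (A i + 2)! ≤ 2 ^ (s.card - 1) * ((∑ i ∈ s, A i) + 2)! := by
  induction hs using Finset.Nonempty.cons_induction with
  | singleton i => simp
  | cons i s hi hs ih =>
    rw [Finset.prod_cons, Finset.sum_cons, Finset.card_cons]
    have hcard : 1 ≤ s.card := Finset.Nonempty.card_pos hs
    calc (A i + 2)! * ∏ j ∈ s, (A j + 2)!
        ≤ (A i + 2)! * (2 ^ (s.card - 1) * ((∑ j ∈ s, A j) + 2)!) := by gcongr
      _ = 2 ^ (s.card - 1) * ((A i + 2)! * ((∑ j ∈ s, A j) + 2)!) := by ring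
      _ ≤ 2 ^ (s.card - 1) * (2 * (A i + (∑ j ∈ s, A j) + 2)!) :=
          Nat.mul_le_mul_left _ (lemL _ _)
      _ = 2 ^ (s.card - 1 + 1) * ((A i + ∑ j ∈ s, A j) + 2)! := by ring
      _ = 2 ^ (s.card + 1 - 1) * ((A i + ∑ j ∈ s, A j) + 2)! := by
          congr 2
          omega

theorem stmt_6 (k N : ℕ) (hk : 0 < k) (hN : 0 < N)
    (A : Fin k → ℕ) (hA : ∑ i, A i = N) (hmax : ∀ i, A i ≤ N - 1) :
    (∏ i, (Nat.factorial (A i + 2)) : ℝ)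
      ≤ (2 : ℝ) ^ ((k : ℤ) - 2) * 6 * Nat.factorial (N + 1) := by
  -- there is an index with A j ≥ 1
  have hj : ∃ j, 1 ≤ A j := by
    by_contra h
    push_neg at h
    have : ∑ i, A i = 0 := Finset.sum_eq_zero (fun i _ => by have := h i; omega)
    omega
  obtain ⟨j, hj1⟩ := hj
  have hjN : A j ≤ N - 1 := hmax j
  -- k ≥ 2
  have hk2 : 2 ≤ k := by
    by_contra h
    interval_cases k
    · have hj0 : j = 0 := Subsingleton.elim _ _
      have : ∑ i, A i = A j := by rw [Fin.sum_univ_one, hj0]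
      omega
  have hAjle : A j ≤ N := hA ▸ Finset.single_le_sum (fun i _ => Nat.zero_le _) (Finset.mem_univ j)
  -- sum over the rest
  have hsum : ∑ i ∈ Finset.univ.erase j, A i = N - A j := by
    have := Finset.add_sum_erase Finset.univ A (Finset.mem_univ j)
    omega
  have hne : (Finset.univ.erase j).Nonempty := by
    rw [← Finset.card_pos, Finset.card_erase_of_mem (Finset.mem_univ j), Finset.card_univ,
      Fintype.card_fin]
    omega
  have hcard : (Finset.univ.erase j).card = k - 1 := by
    rw [Finset.card_erase_of_mem (Finset.mem_univ j), Finset.card_univ, Fintype.card_fin]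
  have hmerge := prodMerge A (Finset.univ.erase j) hne
  rw [hsum, hcard] at hmerge
  have hb1 : 1 ≤ N - A j := by omega
  have hM := lemM (A j) (N - A j) hj1 hb1
  have hab : A j + (N - A j) + 1 = N + 1 := by omega
  rw [hab] at hM
  have key : ∏ i, (A i + 2)! ≤ 2 ^ (k - 2) * 6 * (N + 1)! := by
    calc ∏ i, (A i + 2)!
        = (A j + 2)! * ∏ i ∈ Finset.univ.erase j, (A i + 2)! :=
          (Finset.mul_prod_erase Finset.univ _ (Finset.mem_univ j)).symm
      _ ≤ (A j + 2)! * (2 ^ (k - 1 - 1) * ((N - A j) + 2)!) := by gcongr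
      _ = 2 ^ (k - 2) * ((A j + 2)! * ((N - A j) + 2)!) := by
          rw [show k - 1 - 1 = k - 2 by omega]; ring
      _ ≤ 2 ^ (k - 2) * (6 * (N + 1)!) := by gcongr
      _ = 2 ^ (k - 2) * 6 * (N + 1)! := by ring
  have hz : (2 : ℝ) ^ ((k : ℤ) - 2) = (2 : ℝ) ^ (k - 2) := by
    rw [show (k : ℤ) - 2 = ((k - 2 : ℕ) : ℤ) by omega, zpow_natCast]
  rw [hz]
  calc (∏ i, ((A i + 2)! : ℝ))
      = ((∏ i, (A i + 2)! : ℕ) : ℝ) := by push_cast; ring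
    _ ≤ ((2 ^ (k - 2) * 6 * (N + 1)! : ℕ) : ℝ) := by exact_mod_cast key
    _ = (2 : ℝ) ^ (k - 2) * 6 * (N + 1)! := by push_cast; ring
end

section
/- Fix a positive integer r and nonnegative integers U, V. Then ∑_{A} ∑_{B} ∏_{i=1}^r (A_i + B_i + 3)! ≤ 2^(11r)·(U + V + 3)!, where A ranges over all r-tuples of nonnegative integers summing to U and B over all r-tuples of nonnegative integers summing to V. -/
/-!
Splitting off the first coordinate of both tuples reduces the claim, by induction on `r`, to the
case of pairs: `∑_{p ⊢ U} ∑_{q ⊢ V} (p₁ + q₁ + 3)! (p₂ + q₂ + 3)! ≤ 2¹¹ (U + V + 3)!`.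
For `s ≤ t`, monotonicity of `n ↦ n.choose s` gives `(s + 3)! (t + 3)! ≤ h s · (s + t + 3)!` with
`h s = (s + 3)!² / (2s + 3)! ≤ 8 (2/3)^s`. Hence every term of the pair sum is at most
`8 ((2/3)^(p₁ + q₁) + (2/3)^(p₂ + q₂)) (U + V + 3)!`, and the geometric series bound the sum by
`8 · 18 · (U + V + 3)!`.
-/

open Finset Nat

theorem Finset.Nat.sum_antidiagonalTuple_succ {M : Type*} [AddCommMonoid M] (k n : ℕ)
    (f : (Fin (k + 1) → ℕ) → M) :
    ∑ A ∈ antidiagonalTuple (k + 1) n, f A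
      = ∑ p ∈ antidiagonal n, ∑ A ∈ antidiagonalTuple k p.2, f (Fin.cons p.1 A) := by
  simp [Finset.sum, antidiagonalTuple, Multiset.Nat.antidiagonalTuple,
    List.Nat.antidiagonalTuple, HasAntidiagonal.antidiagonal, Multiset.Nat.antidiagonal,
    List.flatMap, List.sum_flatten, List.map_flatten, Function.comp_def]

section TupleSum

variable (g : ℕ → ℕ)

def compositionPairSum (r U V : ℕ) : ℕ :=
  ∑ A ∈ antidiagonalTuple r U, ∑ B ∈ antidiagonalTuple r V, ∏ i, g (A i + B i)

theorem compositionPairSum_succ (r U V : ℕ) :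
    compositionPairSum g (r + 1) U V
      = ∑ p ∈ antidiagonal U, ∑ q ∈ antidiagonal V,
          g (p.1 + q.1) * compositionPairSum g r p.2 q.2 := by
  simp only [compositionPairSum, Finset.Nat.sum_antidiagonalTuple_succ, Fin.prod_univ_succ,
    Fin.cons_zero, Fin.cons_succ, mul_sum]
  exact sum_congr rfl fun p _ => sum_comm

theorem compositionPairSum_le {C : ℕ} (hg0 : 1 ≤ g 0)
    (hg : ∀ U V, ∑ p ∈ antidiagonal U, ∑ q ∈ antidiagonal V, g (p.1 + q.1) * g (p.2 + q.2)
      ≤ C * g (U + V)) :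
    ∀ r U V, compositionPairSum g r U V ≤ C ^ r * g (U + V)
  | 0, 0, 0 => by simpa [compositionPairSum] using hg0
  | 0, 0, V + 1 => by simp [compositionPairSum, antidiagonalTuple_zero_succ]
  | 0, U + 1, V => by simp [compositionPairSum, antidiagonalTuple_zero_succ]
  | r + 1, U, V => by
    rw [compositionPairSum_succ]
    calc ∑ p ∈ antidiagonal U, ∑ q ∈ antidiagonal V, g (p.1 + q.1) * compositionPairSum g r p.2 q.2
        ≤ ∑ p ∈ antidiagonal U, ∑ q ∈ antidiagonal V, g (p.1 + q.1) * (C ^ r * g (p.2 + q.2)) := by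
          gcongr with p _ q _
          exact compositionPairSum_le hg0 hg r p.2 q.2
      _ = C ^ r * ∑ p ∈ antidiagonal U, ∑ q ∈ antidiagonal V, g (p.1 + q.1) * g (p.2 + q.2) := by
          simp only [mul_sum, mul_left_comm]
      _ ≤ C ^ r * (C * g (U + V)) := Nat.mul_le_mul_left _ (hg U V)
      _ = C ^ (r + 1) * g (U + V) := by ring

end TupleSum

theorem Nat.factorial_add_mul_factorial_two_mul_add_le {c s t : ℕ} (h : s ≤ t) :
    (t + c)! * (2 * s + c)! ≤ (s + c)! * (s + t + c)! := by
  have hs := Nat.add_choose_mul_factorial_mul_factorial (s + c) s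
  have ht := Nat.add_choose_mul_factorial_mul_factorial (t + c) s
  have hchoose : (s + c + s).choose s ≤ (t + c + s).choose s := Nat.choose_le_choose _ (by omega)
  calc (t + c)! * (2 * s + c)! = (t + c)! * ((s + c + s).choose s * (s + c)! * s !) := by
        rw [hs, show s + c + s = 2 * s + c by ring]
    _ ≤ (t + c)! * ((t + c + s).choose s * (s + c)! * s !) := by gcongr
    _ = (s + c)! * (t + c + s)! := by rw [← ht]; ring
    _ = (s + c)! * (s + t + c)! := by rw [show t + c + s = s + t + c by ring]

theorem three_pow_mul_factorial_sq_le : ∀ m : ℕ, 3 ^ m * (m + 3)! ^ 2 ≤ 8 * 2 ^ m * (2 * m + 3)!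
  | 0 => by decide
  | 1 => by decide
  | m + 2 => by
    have ih := three_pow_mul_factorial_sq_le (m + 1)
    have hratio : 3 * (m + 5) ^ 2 ≤ 2 * ((2 * m + 6) * (2 * m + 7)) := by nlinarith
    calc 3 ^ (m + 2) * (m + 2 + 3)! ^ 2 = 3 * (m + 5) ^ 2 * (3 ^ (m + 1) * (m + 1 + 3)! ^ 2) := by
          simp only [Nat.factorial_succ]; ring
      _ ≤ 2 * ((2 * m + 6) * (2 * m + 7)) * (8 * 2 ^ (m + 1) * (2 * (m + 1) + 3)!) :=
          Nat.mul_le_mul hratio ih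
      _ = 8 * 2 ^ (m + 2) * (2 * (m + 2) + 3)! := by
          rw [show 2 * (m + 2) + 3 = 2 * (m + 1) + 3 + 1 + 1 by ring]
          simp only [Nat.factorial_succ]; ring

theorem three_pow_mul_factorial_mul_factorial_le {s t : ℕ} (h : s ≤ t) :
    3 ^ s * ((s + 3)! * (t + 3)!) ≤ 8 * 2 ^ s * (s + t + 3)! := by
  refine Nat.le_of_mul_le_mul_right ?_ (Nat.factorial_pos (2 * s + 3))
  calc 3 ^ s * ((s + 3)! * (t + 3)!) * (2 * s + 3)!
      = 3 ^ s * (s + 3)! * ((t + 3)! * (2 * s + 3)!) := by ring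
    _ ≤ 3 ^ s * (s + 3)! * ((s + 3)! * (s + t + 3)!) :=
        Nat.mul_le_mul_left _ (Nat.factorial_add_mul_factorial_two_mul_add_le h)
    _ = 3 ^ s * (s + 3)! ^ 2 * (s + t + 3)! := by ring
    _ ≤ 8 * 2 ^ s * (2 * s + 3)! * (s + t + 3)! :=
        Nat.mul_le_mul_right _ (three_pow_mul_factorial_sq_le s)
    _ = 8 * 2 ^ s * (s + t + 3)! * (2 * s + 3)! := by ring

theorem factorial_mul_factorial_le_of_le {s t : ℕ} (h : s ≤ t) :
    ((s + 3)! * (t + 3)! : ℚ) ≤ 8 * (2 / 3) ^ s * (s + t + 3)! := by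
  have key : (3 ^ s * ((s + 3)! * (t + 3)!) : ℚ) ≤ 8 * 2 ^ s * (s + t + 3)! := by
    exact_mod_cast three_pow_mul_factorial_mul_factorial_le h
  rw [div_pow, mul_div_assoc', div_mul_eq_mul_div, le_div_iff₀ (by positivity)]
  linarith

theorem factorial_mul_factorial_le (s t : ℕ) :
    ((s + 3)! * (t + 3)! : ℚ) ≤ 8 * ((2 / 3) ^ s + (2 / 3) ^ t) * (s + t + 3)! := by
  rcases le_total s t with h | h
  · calc ((s + 3)! * (t + 3)! : ℚ) ≤ 8 * (2 / 3) ^ s * (s + t + 3)! :=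
          factorial_mul_factorial_le_of_le h
      _ ≤ 8 * ((2 / 3) ^ s + (2 / 3) ^ t) * (s + t + 3)! := by
          gcongr; exact le_add_of_nonneg_right (by positivity)
  · calc ((s + 3)! * (t + 3)! : ℚ) = (t + 3)! * (s + 3)! := mul_comm _ _
      _ ≤ 8 * (2 / 3) ^ t * (t + s + 3)! := factorial_mul_factorial_le_of_le h
      _ ≤ 8 * ((2 / 3) ^ s + (2 / 3) ^ t) * (s + t + 3)! := by
          rw [add_comm t s]; gcongr; exact le_add_of_nonneg_left (by positivity)

section Geometric

variable {K : Type*} [Field K] [LinearOrder K] [IsStrictOrderedRing K] {x : K}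

theorem sum_antidiagonal_pow_fst_le (hx : 0 ≤ x) (hx1 : x < 1) (n : ℕ) :
    ∑ p ∈ antidiagonal n, x ^ p.1 ≤ (1 - x)⁻¹ := by
  have := geom_sum_Ico_le_of_lt_one (m := 0) (n := n + 1) hx hx1
  rwa [pow_zero, one_div, ← range_eq_Ico, ← Finset.Nat.sum_antidiagonal_eq_sum_range_succ_mk
    (fun p => x ^ p.1)] at this

theorem sum_antidiagonal_pow_snd_le (hx : 0 ≤ x) (hx1 : x < 1) (n : ℕ) :
    ∑ p ∈ antidiagonal n, x ^ p.2 ≤ (1 - x)⁻¹ := by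
  rw [← Finset.Nat.sum_antidiagonal_swap]
  exact sum_antidiagonal_pow_fst_le hx hx1 n

end Geometric

theorem sum_antidiagonal_sum_antidiagonal_factorial_le (U V : ℕ) :
    ∑ p ∈ antidiagonal U, ∑ q ∈ antidiagonal V, (p.1 + q.1 + 3)! * (p.2 + q.2 + 3)!
      ≤ 2 ^ 11 * (U + V + 3)! := by
  have hfst (n : ℕ) : ∑ p ∈ antidiagonal n, (2 / 3 : ℚ) ^ p.1 ≤ 3 := by
    refine (sum_antidiagonal_pow_fst_le (by norm_num) (by norm_num) n).trans_eq ?_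
    norm_num
  have hsnd (n : ℕ) : ∑ p ∈ antidiagonal n, (2 / 3 : ℚ) ^ p.2 ≤ 3 := by
    refine (sum_antidiagonal_pow_snd_le (by norm_num) (by norm_num) n).trans_eq ?_
    norm_num
  rw [← Nat.cast_le (α := ℚ)]
  push_cast
  calc ∑ p ∈ antidiagonal U, ∑ q ∈ antidiagonal V, ((p.1 + q.1 + 3)! * (p.2 + q.2 + 3)! : ℚ)
      ≤ ∑ p ∈ antidiagonal U, ∑ q ∈ antidiagonal V,
          8 * ((2 / 3) ^ (p.1 + q.1) + (2 / 3) ^ (p.2 + q.2)) * ((U + V + 3)! : ℚ) := by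
        refine sum_le_sum fun p hp => sum_le_sum fun q hq => ?_
        rw [HasAntidiagonal.mem_antidiagonal] at hp hq
        have := factorial_mul_factorial_le (p.1 + q.1) (p.2 + q.2)
        rwa [show p.1 + q.1 + (p.2 + q.2) = U + V by omega] at this
    _ = 8 * ((∑ p ∈ antidiagonal U, (2 / 3 : ℚ) ^ p.1) * ∑ q ∈ antidiagonal V, (2 / 3 : ℚ) ^ q.1
          + (∑ p ∈ antidiagonal U, (2 / 3 : ℚ) ^ p.2) * ∑ q ∈ antidiagonal V, (2 / 3 : ℚ) ^ q.2)
          * ((U + V + 3)! : ℚ) := by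
        rw [sum_mul_sum, sum_mul_sum, ← sum_add_distrib, mul_sum, sum_mul]
        refine sum_congr rfl fun p _ => ?_
        rw [← sum_add_distrib, mul_sum, sum_mul]
        refine sum_congr rfl fun q _ => ?_
        ring
    _ ≤ 8 * (3 * 3 + 3 * 3) * ((U + V + 3)! : ℚ) := by
        gcongr <;> first | positivity | apply hfst | apply hsnd
    _ ≤ 2 ^ 11 * ((U + V + 3)! : ℚ) := by gcongr; norm_num

theorem stmt_9_general (r U V : ℕ) :
    ∑ A ∈ Finset.Nat.antidiagonalTuple r U, ∑ B ∈ Finset.Nat.antidiagonalTuple r V,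
      ∏ i, Nat.factorial (A i + B i + 3)
      ≤ 2 ^ (11 * r) * Nat.factorial (U + V + 3) := by
  rw [pow_mul]
  exact compositionPairSum_le (fun n => (n + 3)!) (Nat.factorial_pos 3)
    sum_antidiagonal_sum_antidiagonal_factorial_le r U V

theorem stmt_9 (r U V : ℕ) (hr : 0 < r) :
    ∑ A ∈ Finset.Nat.antidiagonalTuple r U, ∑ B ∈ Finset.Nat.antidiagonalTuple r V,
      ∏ i, Nat.factorial (A i + B i + 3)
      ≤ 2 ^ (11 * r) * Nat.factorial (U + V + 3) :=
  stmt_9_general r U V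
end
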